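/- arXiv:1608.04315 — 2 statements merged into one kernel-verified Lean document; each statement's English description precedes it below -/
import Mathlib

section
/- Let α be a complex number, k a positive integer, and x a complex number with |x| < 1. As γ → -k (with γ avoiding the nonpositive integers and 0), the value ₂F₁(α, 1+γ; γ; x) = ∑_{n=0}^∞ [(α)_n (1+γ)_n / ((γ)_n n!)] x^n tends to ∑_{n=0}^{k-1} [(α)_n (1-k)_n / ((-k)_n n!)] x^n - [(α)_{k+1} / (k · (k+1)!)] · x^{k+1} · ₂F₁(α+k+1, 2; k+2; x). -/
/-!
Since `(1 + γ)_n / (γ)_n = (γ + n) / γ`, the series equals `A + B / γ` with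
`A = ∑ (α)_n xⁿ / n!` and `B = ∑ n (α)_n xⁿ / n!`, both independent of `γ`, so its limit is
`A - B / k`. In `A - B / k` the term `n = k` vanishes, the terms `n < k` are those of the finite
sum, and the terms `n = k + 1 + m` reassemble into `₂F₁(α + k + 1, 2; k + 2; x)`.
-/

open Filter Polynomial

noncomputable def hypergeometricTerm (a b c x : ℂ) (n : ℕ) : ℂ :=
  (ascPochhammer ℂ n).eval a * (ascPochhammer ℂ n).eval b /
    ((ascPochhammer ℂ n).eval c * (n.factorial : ℂ)) * x ^ n

/-- The `n`-th term of the binomial series of `(1 - x) ^ (-α)`. -/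
noncomputable def negBinomialTerm (α x : ℂ) (n : ℕ) : ℂ :=
  (ascPochhammer ℂ n).eval α * x ^ n / (n.factorial : ℂ)

section Pochhammer

variable {R : Type*} [CommRing R]

lemma ascPochhammer_eval_add (r : R) (n m : ℕ) :
    (ascPochhammer R (n + m)).eval r =
      (ascPochhammer R n).eval r * (ascPochhammer R m).eval (r + n) := by
  rw [← ascPochhammer_mul, eval_mul, eval_comp, eval_add, eval_X, eval_natCast]

lemma mul_ascPochhammer_eval_one_add (r : R) (n : ℕ) :
    r * (ascPochhammer R n).eval (1 + r) = (ascPochhammer R n).eval r * (r + n) := by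
  rw [← ascPochhammer_succ_eval, ascPochhammer_succ_left, eval_mul, eval_comp, eval_add, eval_X,
    eval_one, add_comm]

lemma ascPochhammer_eval_neg_natCast_ne_zero [IsDomain R] [CharZero R] {k n : ℕ} (h : n ≤ k) :
    (ascPochhammer R n).eval (-(k : R)) ≠ 0 := by
  rw [ne_eq, ascPochhammer_eval_eq_zero_iff]
  rintro ⟨m, hm, hmk⟩
  rw [neg_neg, Nat.cast_inj] at hmk
  omega

lemma ascPochhammer_eval_ne_zero [IsDomain R] {r : R} (hr : ∀ m : ℕ, r ≠ -m) (n : ℕ) :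
    (ascPochhammer R n).eval r ≠ 0 := by
  rw [ne_eq, ascPochhammer_eval_eq_zero_iff]
  rintro ⟨m, -, hm⟩
  exact hr m (by rw [hm, neg_neg])

end Pochhammer

lemma hypergeometricTerm_one_add_self (α x : ℂ) {γ : ℂ} (n : ℕ) (hγ : γ ≠ 0)
    (hγn : (ascPochhammer ℂ n).eval γ ≠ 0) :
    hypergeometricTerm α (1 + γ) γ x n =
      negBinomialTerm α x n + γ⁻¹ * (n * negBinomialTerm α x n) := by
  have hn : (n.factorial : ℂ) ≠ 0 := Nat.cast_ne_zero.2 n.factorial_ne_zero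
  unfold hypergeometricTerm negBinomialTerm
  field_simp
  linear_combination (ascPochhammer ℂ n).eval α * x ^ n * mul_ascPochhammer_eval_one_add γ n

lemma summable_negBinomialTerm (α : ℂ) {x : ℂ} (hx : ‖x‖ < 1) :
    Summable (negBinomialTerm α x) := by
  set p := ordinaryHypergeometricSeries ℂ α (1 : ℂ) 1
  have hp : 1 ≤ p.radius := by
    have := binomialSeries_radius_ge_one (𝔸 := ℂ) (a := -α)
    rwa [binomialSeries_eq_ordinaryHypergeometricSeries (b := 1) (by norm_cast; simp),
      FormalMultilinearSeries.radius_compNeg, neg_neg] at this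
  have hxp : x ∈ Metric.eball (0 : ℂ) p.radius :=
    mem_eball_zero_iff.2 (lt_of_lt_of_le (by rwa [← ofReal_norm, ENNReal.ofReal_lt_one]) hp)
  refine (p.summable_norm_apply hxp).of_norm.congr fun n => ?_
  have hn : (n.factorial : ℂ) ≠ 0 := Nat.cast_ne_zero.2 n.factorial_ne_zero
  rw [ordinaryHypergeometricSeries_apply_eq, ascPochhammer_eval_one, smul_eq_mul, negBinomialTerm]
  field_simp

lemma succ_mul_negBinomialTerm_succ (α x : ℂ) (n : ℕ) :
    ((n + 1 : ℕ) : ℂ) * negBinomialTerm α x (n + 1) = α * x * negBinomialTerm (α + 1) x n := by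
  have hn : (n.factorial : ℂ) ≠ 0 := Nat.cast_ne_zero.2 n.factorial_ne_zero
  rw [negBinomialTerm, negBinomialTerm, ascPochhammer_succ_left, eval_mul, eval_comp, eval_add,
    eval_X, eval_one, Nat.factorial_succ]
  push_cast
  field_simp
  ring

lemma summable_natCast_mul_negBinomialTerm (α : ℂ) {x : ℂ} (hx : ‖x‖ < 1) :
    Summable fun n : ℕ => (n : ℂ) * negBinomialTerm α x n := by
  rw [← summable_nat_add_iff 1]
  simp only [succ_mul_negBinomialTerm_succ]
  exact (summable_negBinomialTerm (α + 1) hx).mul_left _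

lemma negBinomialTerm_tail_eq_hypergeometricTerm (α x : ℂ) {k : ℕ} (hk : k ≠ 0) (m : ℕ) :
    negBinomialTerm α x (k + 1 + m) +
        (-(k : ℂ))⁻¹ * (((k + 1 + m : ℕ) : ℂ) * negBinomialTerm α x (k + 1 + m)) =
      -((ascPochhammer ℂ (k + 1)).eval α / ((k : ℂ) * ((k + 1).factorial : ℂ)) * x ^ (k + 1)) *
        hypergeometricTerm (α + k + 1) 2 (k + 2) x m := by
  have hk0 : (k : ℂ) ≠ 0 := Nat.cast_ne_zero.2 hk
  have two : (ascPochhammer ℂ m).eval 2 = ((m + 1).factorial : ℂ) := by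
    simpa [one_add_one_eq_two, add_comm] using factorial_mul_ascPochhammer ℂ 1 m
  have shift : ((k + 1).factorial : ℂ) * (ascPochhammer ℂ m).eval ((k : ℂ) + 2) =
      ((k + 1 + m).factorial : ℂ) := by
    have := factorial_mul_ascPochhammer ℂ (k + 1) m
    push_cast at this
    rw [← this]; ring_nf
  have hm : (m.factorial : ℂ) ≠ 0 := Nat.cast_ne_zero.2 m.factorial_ne_zero
  have hk1 : ((k + 1).factorial : ℂ) ≠ 0 := Nat.cast_ne_zero.2 (k + 1).factorial_ne_zero
  have hkm : ((k + 1 + m).factorial : ℂ) ≠ 0 := Nat.cast_ne_zero.2 (k + 1 + m).factorial_ne_zero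
  have hE : (ascPochhammer ℂ m).eval ((k : ℂ) + 2) ≠ 0 := by
    intro h; rw [h, mul_zero] at shift; exact hkm shift.symm
  unfold negBinomialTerm hypergeometricTerm
  rw [ascPochhammer_eval_add, two, ← shift, Nat.factorial_succ m]
  push_cast
  rw [← add_assoc α]
  field_simp
  ring

lemma sum_sub_mul_tsum_hypergeometricTerm_eq (α : ℂ) {x : ℂ} (hx : ‖x‖ < 1) {k : ℕ}
    (hk : k ≠ 0) :
    ∑ n ∈ Finset.range k, hypergeometricTerm α (1 - k) (-k) x n
      - (ascPochhammer ℂ (k + 1)).eval α / ((k : ℂ) * ((k + 1).factorial : ℂ)) * x ^ (k + 1) *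
        ∑' n, hypergeometricTerm (α + k + 1) 2 (k + 2) x n
      = ∑' n, negBinomialTerm α x n + (-(k : ℂ))⁻¹ * ∑' n : ℕ, n * negBinomialTerm α x n := by
  have hk0 : -(k : ℂ) ≠ 0 := neg_ne_zero.2 (Nat.cast_ne_zero.2 hk)
  set S : ℕ → ℂ := fun n => negBinomialTerm α x n + (-(k : ℂ))⁻¹ * (n * negBinomialTerm α x n)
  have hS : Summable S :=
    (summable_negBinomialTerm α hx).add ((summable_natCast_mul_negBinomialTerm α hx).mul_left _)
  have head : ∑ n ∈ Finset.range k, hypergeometricTerm α (1 - k) (-k) x n =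
      ∑ n ∈ Finset.range (k + 1), S n := by
    have vanish : S k = 0 := by
      simp only [S]
      field_simp
      ring
    rw [Finset.sum_range_succ, vanish, add_zero]
    refine Finset.sum_congr rfl fun n hn => ?_
    rw [sub_eq_add_neg]
    exact hypergeometricTerm_one_add_self α x n hk0
      (ascPochhammer_eval_neg_natCast_ne_zero (Finset.mem_range.1 hn).le)
  have tail : ∑' m, S (m + (k + 1)) =
      -((ascPochhammer ℂ (k + 1)).eval α / ((k : ℂ) * ((k + 1).factorial : ℂ)) * x ^ (k + 1)) *
        ∑' n, hypergeometricTerm (α + k + 1) 2 (k + 2) x n := by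
    rw [← tsum_mul_left]
    exact tsum_congr fun m => by
      rw [add_comm m]; exact negBinomialTerm_tail_eq_hypergeometricTerm α x hk m
  calc _ = ∑ n ∈ Finset.range (k + 1), S n + ∑' m, S (m + (k + 1)) := by rw [head, tail]; ring
    _ = ∑' n, S n := hS.sum_add_tsum_nat_add _
    _ = _ := by
      rw [(summable_negBinomialTerm α hx).tsum_add
        ((summable_natCast_mul_negBinomialTerm α hx).mul_left _), tsum_mul_left]

lemma tsum_hypergeometricTerm_one_add_self (α : ℂ) {x γ : ℂ} (hx : ‖x‖ < 1)
    (hγ : ∀ m : ℕ, γ ≠ -m) :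
    ∑' n, hypergeometricTerm α (1 + γ) γ x n =
      ∑' n, negBinomialTerm α x n + γ⁻¹ * ∑' n : ℕ, n * negBinomialTerm α x n := by
  have hγ0 : γ ≠ 0 := by simpa using hγ 0
  rw [tsum_congr fun n =>
      hypergeometricTerm_one_add_self α x n hγ0 (ascPochhammer_eval_ne_zero hγ n),
    (summable_negBinomialTerm α hx).tsum_add
      ((summable_natCast_mul_negBinomialTerm α hx).mul_left _), tsum_mul_left]

/-- As `γ → -k` (avoiding nonpositive integers), `₂F₁(α, 1+γ; γ; x)` tends to
`∑_{n=0}^{k-1} (α)_n (1-k)_n / ((-k)_n n!) x^n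
  - ((α)_{k+1} / (k (k+1)!)) x^{k+1} ₂F₁(α+k+1, 2; k+2; x)`. -/
theorem limit_of_hypergeometric_as_gamma_to_neg_k (α x : ℂ) (k : ℕ) (hk : 1 ≤ k)
    (hx : ‖x‖ < 1) :
    Tendsto
      (fun γ : ℂ => ∑' n : ℕ,
        ((ascPochhammer ℂ n).eval α * (ascPochhammer ℂ n).eval (1 + γ) /
          ((ascPochhammer ℂ n).eval γ * (n.factorial : ℂ))) * x ^ n)
      (nhdsWithin (-(k : ℂ)) {γ : ℂ | ∀ m : ℕ, γ ≠ -(m : ℂ)})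
      (nhds
        ((∑ n ∈ Finset.range k,
          ((ascPochhammer ℂ n).eval α * (ascPochhammer ℂ n).eval (1 - (k : ℂ)) /
            ((ascPochhammer ℂ n).eval (-(k : ℂ)) * (n.factorial : ℂ))) * x ^ n)
        - ((ascPochhammer ℂ (k + 1)).eval α / ((k : ℂ) * ((k + 1).factorial : ℂ))) * x ^ (k + 1) *
          ∑' n : ℕ, ((ascPochhammer ℂ n).eval (α + (k : ℂ) + 1) * (ascPochhammer ℂ n).eval 2 /
            ((ascPochhammer ℂ n).eval ((k : ℂ) + 2) * (n.factorial : ℂ))) * x ^ n)) := by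
  have hk0 : k ≠ 0 := Nat.one_le_iff_ne_zero.1 hk
  have hcont : ContinuousAt (fun γ : ℂ => ∑' n, negBinomialTerm α x n +
      γ⁻¹ * ∑' n : ℕ, n * negBinomialTerm α x n) (-(k : ℂ)) :=
    continuousAt_const.add ((continuousAt_inv₀ (neg_ne_zero.2 (Nat.cast_ne_zero.2 hk0))).mul
      continuousAt_const)
  have hlim := hcont.continuousWithinAt (s := {γ : ℂ | ∀ m : ℕ, γ ≠ -(m : ℂ)}).tendsto
  rw [← sum_sub_mul_tsum_hypergeometricTerm_eq α hx hk0] at hlim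
  refine hlim.congr' ?_
  filter_upwards [self_mem_nhdsWithin] with γ hγ
  exact (tsum_hypergeometricTerm_one_add_self α hx hγ).symm
end

section
/- For every nonnegative integer m, setting a = -3/4 - m (so 4a+1 = -2-4m and 4a = -3-4m), the terminating hypergeometric sum satisfies ∑_{n=0}^{4m+2} [(a)_n (4a+1)_n / ((4a)_n · n!)] · (4/3)^n = 5 · (-1)^m 2^{8m-1} (3/4)_m (13/4)_{3m} / (3^{4m+2} (4)_{4m}), i.e. equals 5 · (-1)^m 2^{8m} (3/4)_m (13/4)_{3m} / (2 · 3^{4m+2} (4)_{4m}). -/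
lemma asc_eval_succ (n : ℕ) (x : ℚ) :
    (ascPochhammer ℚ (n+1)).eval x = (ascPochhammer ℚ n).eval x * (x + n) := by
  simp [ascPochhammer_succ_right]

lemma asc_eval_succ_left (n : ℕ) (x : ℚ) :
    (ascPochhammer ℚ (n+1)).eval x = x * (ascPochhammer ℚ n).eval (x+1) := by
  rw [ascPochhammer_succ_left]
  simp [Polynomial.eval_comp]

lemma asc_shift (n : ℕ) (x : ℚ) :
    (ascPochhammer ℚ n).eval x * (x + n) = x * (ascPochhammer ℚ n).eval (x+1) := by
  rw [← asc_eval_succ, asc_eval_succ_left]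

lemma asc_ne_zero (n : ℕ) (x : ℚ) (h : ∀ k < n, x + k ≠ 0) :
    (ascPochhammer ℚ n).eval x ≠ 0 := by
  induction n with
  | zero => simp
  | succ n ih =>
      rw [asc_eval_succ]
      exact mul_ne_zero (ih fun k hk => h k (by omega)) (h n (by omega))

lemma asc_pos (n : ℕ) (x : ℚ) (hx : 0 < x) : 0 < (ascPochhammer ℚ n).eval x := by
  induction n with
  | zero => simp
  | succ n ih => rw [asc_eval_succ]; positivity

lemma asc_mul_eval (n k : ℕ) (x : ℚ) :
    (ascPochhammer ℚ (n + k)).eval x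
      = (ascPochhammer ℚ n).eval x * (ascPochhammer ℚ k).eval (x + n) := by
  rw [← ascPochhammer_mul]
  simp [Polynomial.eval_comp]

lemma asc_one_eval (x : ℚ) : (ascPochhammer ℚ 1).eval x = x := by simp

lemma asc_three_eval (x : ℚ) : (ascPochhammer ℚ 3).eval x = x * (x+1) * (x+2) := by
  rw [show (3:ℕ) = 0+1+1+1 from rfl]
  simp [asc_eval_succ]

lemma asc_four_eval (x : ℚ) : (ascPochhammer ℚ 4).eval x = x * (x+1) * (x+2) * (x+3) := by
  rw [show (4:ℕ) = 0+1+1+1+1 from rfl]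
  simp [asc_eval_succ]

lemma keyB (m : ℕ) :
    -3 * (ascPochhammer ℚ (4*m+3)).eval (-3/4 - (m:ℚ)) * (4/3:ℚ)^(4*m+3) *
        (2 * (3:ℚ)^(4*m+2) * (ascPochhammer ℚ (4*m)).eval 4)
    = 5 * (-1:ℚ)^m * (2:ℚ)^(8*m) * (ascPochhammer ℚ m).eval (3/4) *
        (ascPochhammer ℚ (3*m)).eval (13/4) * ((4*m+3).factorial : ℚ) := by
  induction m with
  | zero =>
      norm_num [show (3:ℕ) = 0+1+1+1 from rfl, asc_eval_succ, Nat.factorial]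
  | succ m ih =>
      have hA : (ascPochhammer ℚ (4*(m+1)+3)).eval (-3/4 - ((m:ℚ)+1))
          = (-3/4 - (m:ℚ) - 1) * ((ascPochhammer ℚ (4*m+3)).eval (-3/4 - (m:ℚ)) *
            ((3*(m:ℚ)+9/4) * (3*(m:ℚ)+13/4) * (3*(m:ℚ)+17/4))) := by
        rw [show 4*(m+1)+3 = 1 + (4*m+3+3) from by ring, asc_mul_eval 1 (4*m+3+3),
          asc_mul_eval (4*m+3) 3, asc_one_eval, asc_three_eval]
        have hp : (-3/4 - ((m:ℚ)+1)) + (1:ℕ) = -3/4 - (m:ℚ) := by push_cast; ring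
        rw [hp]
        push_cast; ring
      have hD : (ascPochhammer ℚ (4*(m+1))).eval 4
          = (ascPochhammer ℚ (4*m)).eval 4 *
            ((4*(m:ℚ)+4) * (4*(m:ℚ)+5) * (4*(m:ℚ)+6) * (4*(m:ℚ)+7)) := by
        rw [show 4*(m+1) = 4*m + 4 from by ring, asc_mul_eval (4*m) 4, asc_four_eval]
        push_cast; ring
      have hB : (ascPochhammer ℚ (m+1)).eval (3/4)
          = (ascPochhammer ℚ m).eval (3/4) * ((m:ℚ) + 3/4) := by
        rw [asc_eval_succ]; ring
      have hC : (ascPochhammer ℚ (3*(m+1))).eval (13/4)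
          = (ascPochhammer ℚ (3*m)).eval (13/4) *
            ((3*(m:ℚ)+13/4) * (3*(m:ℚ)+17/4) * (3*(m:ℚ)+21/4)) := by
        rw [show 3*(m+1) = 3*m + 3 from by ring, asc_mul_eval (3*m) 3, asc_three_eval]
        push_cast; ring
      have hF : (((4*(m+1)+3).factorial : ℕ) : ℚ)
          = ((4*m+3).factorial : ℚ) * ((4*(m:ℚ)+4) * (4*(m:ℚ)+5) * (4*(m:ℚ)+6) * (4*(m:ℚ)+7)) := by
        rw [show 4*(m+1)+3 = (4*m+3)+1+1+1+1 from by ring,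
          Nat.factorial_succ ((4*m+3)+1+1+1), Nat.factorial_succ ((4*m+3)+1+1),
          Nat.factorial_succ ((4*m+3)+1), Nat.factorial_succ (4*m+3)]
        push_cast; ring
      push_cast
      rw [hA, hB, hC, hD] at *
      rw [hF]
      linear_combination (256*(-(m:ℚ)-7/4)*(3*(m:ℚ)+9/4)*(3*(m:ℚ)+13/4)*(3*(m:ℚ)+17/4)
        *(4*(m:ℚ)+4)*(4*(m:ℚ)+5)*(4*(m:ℚ)+6)*(4*(m:ℚ)+7)) * ih

lemma ptwise (n : ℕ) (μ P Q R F : ℚ) (hQ : Q ≠ 0) (hF : F ≠ 0)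
    (hμ3 : 4*μ+3 ≠ 0)
    (hshift : Q * (4*(-3/4-μ) + n) = 4*(-3/4-μ) * R) :
    P * R / (Q * F) * (4/3:ℚ)^n
      = P * ((-3/4-μ) + n) * (4/3:ℚ)^(n+1) / ((((n:ℚ))+1)*F) * (-3*((n:ℚ)+1)/(4*μ+3))
        - P * (4/3:ℚ)^n / F * (-3*(n:ℚ)/(4*μ+3)) := by
  have h1 : 4*(-3/4-μ) ≠ 0 := by intro h; apply hμ3; linarith
  have hn1 : ((n:ℚ))+1 ≠ 0 := by positivity
  have hR' : R = Q * (4*(-3/4-μ) + n) / (4*(-3/4-μ)) := by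
    rw [eq_div_iff h1]
    linear_combination -hshift
  rw [hR']
  obtain ⟨c, hc⟩ : ∃ c : ℚ, c = 4*(-3/4-μ) := ⟨_, rfl⟩
  rw [← hc, show 4*μ+3 = -c from by rw [hc]; ring,
    show (-3/4-μ : ℚ) = c/4 from by rw [hc]; ring]
  have hcne : c ≠ 0 := hc ▸ h1
  have h3n : (3:ℚ)^n ≠ 0 := by positivity
  field_simp [hQ, hF, hcne, hn1, h3n]
  ring

lemma telescoped (m : ℕ) :
    ∑ n ∈ Finset.range (4 * m + 2 + 1),
      ((ascPochhammer ℚ n).eval (-3/4 - (m : ℚ)) *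
        (ascPochhammer ℚ n).eval (4 * (-3/4 - (m : ℚ)) + 1) /
        ((ascPochhammer ℚ n).eval (4 * (-3/4 - (m : ℚ))) * (n.factorial : ℚ))) * (4 / 3 : ℚ) ^ n
    = -3 * (ascPochhammer ℚ (4*m+3)).eval (-3/4 - (m:ℚ)) * (4/3:ℚ)^(4*m+3) /
        ((4*m+3).factorial : ℚ) := by
  set f : ℕ → ℚ := fun n =>
    (ascPochhammer ℚ n).eval (-3/4 - (m:ℚ)) * (4/3:ℚ)^n / (n.factorial : ℚ) *
      (-3*(n:ℚ)/(4*(m:ℚ)+3)) with hf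
  have hμ3 : 4*(m:ℚ)+3 ≠ 0 := by positivity
  have key : ∀ n ∈ Finset.range (4*m+2+1),
      ((ascPochhammer ℚ n).eval (-3/4 - (m:ℚ)) *
        (ascPochhammer ℚ n).eval (4 * (-3/4 - (m:ℚ)) + 1) /
        ((ascPochhammer ℚ n).eval (4 * (-3/4 - (m:ℚ))) * (n.factorial : ℚ))) * (4/3:ℚ)^n
      = f (n+1) - f n := by
    intro n hn
    rw [Finset.mem_range] at hn
    have hQ : (ascPochhammer ℚ n).eval (4 * (-3/4 - (m:ℚ))) ≠ 0 := by
      apply asc_ne_zero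
      intro k hk
      have hk' : (k:ℚ) ≤ 4*(m:ℚ)+1 := by
        have : k ≤ 4*m+1 := by omega
        exact_mod_cast this
      intro hzero; nlinarith
    have hfac : ((n.factorial : ℕ) : ℚ) ≠ 0 := by exact_mod_cast n.factorial_ne_zero
    have hpt := ptwise n (m:ℚ) ((ascPochhammer ℚ n).eval (-3/4 - (m:ℚ)))
      ((ascPochhammer ℚ n).eval (4 * (-3/4 - (m:ℚ))))
      ((ascPochhammer ℚ n).eval (4 * (-3/4 - (m:ℚ)) + 1))
      ((n.factorial : ℕ) : ℚ) hQ hfac hμ3 (asc_shift n (4 * (-3/4 - (m:ℚ))))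
    rw [hf]
    simp only [asc_eval_succ, Nat.factorial_succ]
    push_cast
    linear_combination hpt
  rw [Finset.sum_congr rfl key, show 4*m+2+1 = 4*m+3 from rfl, Finset.sum_range_sub]
  rw [hf]
  simp only [Nat.cast_zero, Nat.cast_ofNat]
  push_cast
  have hfac : (((4*m+3).factorial : ℕ) : ℚ) ≠ 0 := by
    exact_mod_cast (4*m+3).factorial_ne_zero
  field_simp
  ring

/-- Formula (1,4,4-1)(i), case `a = -3/4-m`:
`₂F₁(a, 4a+1; 4a; 4/3) = 5 (-1)^m 2^{8m-1} (3/4)_m (13/4)_{3m} / (3^{4m+2} (4)_{4m})`,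
written as `5 (-1)^m 2^{8m} (3/4)_m (13/4)_{3m} / (2 · 3^{4m+2} (4)_{4m})`. -/
theorem case2_three_quarters (m : ℕ) :
    ∑ n ∈ Finset.range (4 * m + 2 + 1),
      ((ascPochhammer ℚ n).eval (-3/4 - (m : ℚ)) *
        (ascPochhammer ℚ n).eval (4 * (-3/4 - (m : ℚ)) + 1) /
        ((ascPochhammer ℚ n).eval (4 * (-3/4 - (m : ℚ))) * (n.factorial : ℚ))) * (4 / 3 : ℚ) ^ n
    = 5 * (-1 : ℚ) ^ m * (2 : ℚ) ^ (8 * m) * (ascPochhammer ℚ m).eval (3/4 : ℚ) *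
        (ascPochhammer ℚ (3 * m)).eval (13/4 : ℚ) /
        (2 * (3 : ℚ) ^ (4 * m + 2) * (ascPochhammer ℚ (4 * m)).eval (4 : ℚ)) := by
  rw [telescoped m]
  have hfac : (((4*m+3).factorial : ℕ) : ℚ) ≠ 0 := by
    exact_mod_cast (4*m+3).factorial_ne_zero
  have hD : (2 * (3:ℚ)^(4*m+2) * (ascPochhammer ℚ (4*m)).eval 4) ≠ 0 := by
    have := asc_pos (4*m) (4:ℚ) (by norm_num)
    positivity
  rw [div_eq_div_iff hfac hD]
  linear_combination keyB m
end
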